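/- arXiv:2310.06708 — 3 statements merged into one kernel-verified Lean document; each statement's English description precedes it below -/
import Mathlib

section
/- Let x, w, y be vectors in an inner product space V with w not a scalar multiple of x. Let p1 be the orthogonal projection of y onto span{x, w}, and let p2 be the orthogonal projection of x onto span{w}. If α1, c1 are the unique scalars with α1·x + c1·w = p1, and α2, c2 are the unique scalars with α2·(x − p2) + c2·w = p1, then α2 = α1. -/
open RealInnerProductSpace

/-- `p` is the orthogonal projection of `y` onto the subspace `S`. -/
def IsOrthProj {V : Type*} [NormedAddCommGroup V] [InnerProductSpace ℝ V]
    (S : Submodule ℝ V) (y p : V) : Prop :=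
  p ∈ S ∧ ∀ z ∈ S, ⟪y - p, z⟫ = 0

theorem residualX_eq_multipleRegression
    {V : Type*} [NormedAddCommGroup V] [InnerProductSpace ℝ V]
    (x w y p1 p2 : V)
    (hind : LinearIndependent ℝ ![x, w])
    (hp1 : IsOrthProj (Submodule.span ℝ {x, w}) y p1)
    (hp2 : IsOrthProj (Submodule.span ℝ {w}) x p2)
    (α₁ c₁ α₂ c₂ : ℝ)
    (h1 : α₁ • x + c₁ • w = p1)
    (h2 : α₂ • (x - p2) + c₂ • w = p1) :
    α₂ = α₁ := by
  obtain ⟨t, ht⟩ := Submodule.mem_span_singleton.mp hp2.1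
  have key : (α₂ - α₁) • x + (c₂ - α₂ * t - c₁) • w = 0 := by
    have := h2.trans h1.symm
    rw [← ht] at this
    rw [sub_smul, sub_smul, sub_smul]
    rw [smul_sub, smul_smul] at this
    linear_combination (norm := module) this
  exact sub_eq_zero.mp (LinearIndependent.pair_iff.mp hind _ _ key).1
end

section
/- Let x, w, y be vectors in a real inner product space with x and w linearly independent. Let p1 be the orthogonal projection of y onto span{x,w}, p2 the orthogonal projection of x onto span{w}, and p3 the orthogonal projection of y onto span{w}. If α1 is the coefficient of x in p1 = α1·x + c1·w and α3 is the coefficient of (x − p2) in p1 − p3 = α3·(x − p2) + c3·w, then α3 = α1. -/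
open RealInnerProductSpace

theorem residualXY_eq_multipleRegression
    {V : Type*} [NormedAddCommGroup V] [InnerProductSpace ℝ V]
    (x w y p1 p2 p3 : V)
    (hind : LinearIndependent ℝ ![x, w])
    (hp1 : IsOrthProj (Submodule.span ℝ {x, w}) y p1)
    (hp2 : IsOrthProj (Submodule.span ℝ {w}) x p2)
    (hp3 : IsOrthProj (Submodule.span ℝ {w}) y p3)
    (α₁ c₁ α₃ c₃ : ℝ)
    (h1 : p1 = α₁ • x + c₁ • w)
    (h3 : p1 - p3 = α₃ • (x - p2) + c₃ • w) :
    α₃ = α₁ := by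
  obtain ⟨k2, hk2⟩ := Submodule.mem_span_singleton.mp hp2.1
  obtain ⟨k3, hk3⟩ := Submodule.mem_span_singleton.mp hp3.1
  rw [h1, ← hk2, ← hk3] at h3
  have key : (α₁ - α₃) • x + (c₁ - k3 - (c₃ - α₃ * k2)) • w = 0 := by
    have := h3
    rw [smul_sub, smul_smul] at this
    rw [sub_smul, sub_smul, sub_smul]
    rw [sub_eq_iff_eq_add] at this
    linear_combination (norm := module) this
  have := hind.eq_zero_of_pair key
  linarith [this.1]
end

section
/- Let x, w, y be vectors in a real inner product space with x, w linearly independent, let β_RY = ⟨y − P_w y, x⟩/⟨x,x⟩ be the Residual Y slope and α the multiple-regression coefficient of x. Then β_RY = α · (1 − ⟨x,w⟩²/(⟨x,x⟩⟨w,w⟩)), i.e., the Residual Y estimate equals the multiple-regression estimate shrunk by the factor 1 − cos²θ where θ is the angle between x and w. -/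
open RealInnerProductSpace

theorem residualY_shrinkage
    {V : Type*} [NormedAddCommGroup V] [InnerProductSpace ℝ V]
    (x w y p pw : V)
    (hind : LinearIndependent ℝ ![x, w])
    (hp : IsOrthProj (Submodule.span ℝ {x, w}) y p)
    (hpw : IsOrthProj (Submodule.span ℝ {w}) y pw)
    (α c : ℝ) (hαc : p = α • x + c • w) :
    ⟪y - pw, x⟫ / ⟪x, x⟫ =
      α * (1 - ⟪x, w⟫ ^ 2 / (⟪x, x⟫ * ⟪w, w⟫)) := by
  have hx : x ≠ 0 := by
    have := hind.ne_zero 0; simpa using this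
  have hw : w ≠ 0 := by
    have := hind.ne_zero 1; simpa using this
  have hxx : ⟪x, x⟫ ≠ 0 := inner_self_ne_zero.2 hx
  have hww : ⟪w, w⟫ ≠ 0 := inner_self_ne_zero.2 hw
  obtain ⟨t, ht⟩ := Submodule.mem_span_singleton.1 hpw.1
  have hxmem : x ∈ Submodule.span ℝ ({x, w} : Set V) :=
    Submodule.subset_span (by simp)
  have hwmem : w ∈ Submodule.span ℝ ({x, w} : Set V) :=
    Submodule.subset_span (by simp)
  have h1 : ⟪y, x⟫ = α * ⟪x, x⟫ + c * ⟪w, x⟫ := by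
    have := hp.2 x hxmem
    rw [hαc, inner_sub_left, inner_add_left, real_inner_smul_left,
      real_inner_smul_left, sub_eq_zero] at this
    linarith
  have h2 : ⟪y, w⟫ = α * ⟪x, w⟫ + c * ⟪w, w⟫ := by
    have := hp.2 w hwmem
    rw [hαc, inner_sub_left, inner_add_left, real_inner_smul_left,
      real_inner_smul_left, sub_eq_zero] at this
    linarith
  have h3 : ⟪y, w⟫ = t * ⟪w, w⟫ := by
    have := hpw.2 w (Submodule.mem_span_singleton_self w)
    rw [← ht, inner_sub_left, real_inner_smul_left, sub_eq_zero] at this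
    linarith
  have h4 : ⟪y - pw, x⟫ = ⟪y, x⟫ - t * ⟪w, x⟫ := by
    rw [inner_sub_left, ← ht, real_inner_smul_left]
  have hwx : ⟪w, x⟫ = ⟪x, w⟫ := real_inner_comm x w
  have htval : t = (α * ⟪x, w⟫ + c * ⟪w, w⟫) / ⟪w, w⟫ := by
    field_simp
    linarith [h2, h3]
  rw [h4, h1, hwx, htval]
  field_simp
  ring
end
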